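/- Let T be a bounded linear operator on a Banach space X that is an (m,∞)-isometry. Then for all n ∈ ℕ and all x ∈ X, ‖Tⁿx‖ ≤ max{‖T^k x‖ : 0 ≤ k ≤ m-1}. In particular, T is power bounded: ‖Tⁿ‖ ≤ max{‖T^k‖ : 0 ≤ k ≤ m-1} for all n ∈ ℕ. -/

import Mathlib

/-- T is an (m,∞)-isometry: for every x, the maximum of the norms of T^k x over even
k in {0,...,m} equals the maximum over odd k in {0,...,m}. -/
def IsMInfIsometry {𝕜 X : Type*} [RCLike 𝕜] [NormedAddCommGroup X] [NormedSpace 𝕜 X]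
    (T : X →L[𝕜] X) (m : ℕ) : Prop :=
  ∀ x : X,
    (((Finset.range (m + 1)).filter fun k => Even k).sup fun k => ‖(T ^ k) x‖₊) =
    (((Finset.range (m + 1)).filter fun k => Odd k).sup fun k => ‖(T ^ k) x‖₊)

/-! Whichever parity class contains `m`, the other one lies in `{0, …, m - 1}`, so the hypothesis
bounds `f m` by earlier values; iterating this bounds the whole orbit by its first `m` terms. -/

open Finset

section Sequences

variable {α : Type*} [SemilatticeSup α] [OrderBot α]

theorem le_sup_range_of_sup_even_eq_sup_odd (f : ℕ → α) (m : ℕ)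
    (h : ((range (m + 1)).filter Even).sup f = ((range (m + 1)).filter Odd).sup f) :
    f m ≤ (range m).sup f := by
  rcases Nat.even_or_odd m with hm | hm
  · calc f m ≤ ((range (m + 1)).filter Even).sup f := le_sup (by simp [hm])
      _ = ((range (m + 1)).filter Odd).sup f := h
      _ ≤ (range m).sup f := sup_mono fun k hk => by
          simp only [mem_filter, mem_range, Nat.even_iff, Nat.odd_iff] at hk hm ⊢
          omega
  · calc f m ≤ ((range (m + 1)).filter Odd).sup f := le_sup (by simp [hm])
      _ = ((range (m + 1)).filter Even).sup f := h.symm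
      _ ≤ (range m).sup f := sup_mono fun k hk => by
          simp only [mem_filter, mem_range, Nat.even_iff, Nat.odd_iff] at hk hm ⊢
          omega

theorem le_sup_range_of_forall_add_le_sup_range (f : ℕ → α) (m : ℕ)
    (h : ∀ j, f (j + m) ≤ (range m).sup fun k => f (j + k)) (n : ℕ) :
    f n ≤ (range m).sup f := by
  induction n using Nat.strong_induction_on with
  | _ n ih =>
    by_cases hn : n < m
    · exact le_sup (mem_range.2 hn)
    · obtain ⟨j, rfl⟩ : ∃ j, n = j + m := ⟨n - m, by omega⟩
      exact (h j).trans <| Finset.sup_le fun k hk => ih _ (by rw [mem_range] at hk; omega)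

end Sequences

theorem ContinuousLinearMap.opNNNorm_le_sup_of_nnnorm_apply_le {𝕜 X Y ι : Type*} [RCLike 𝕜]
    [NormedAddCommGroup X] [NormedSpace 𝕜 X] [NormedAddCommGroup Y] [NormedSpace 𝕜 Y]
    {A : X →L[𝕜] Y} {B : ι → X →L[𝕜] Y} {s : Finset ι}
    (h : ∀ x, ‖A x‖₊ ≤ s.sup fun i => ‖B i x‖₊) : ‖A‖₊ ≤ s.sup fun i => ‖B i‖₊ := by
  refine opNNNorm_le_iff.2 fun x => (h x).trans ?_
  rw [NNReal.finset_sup_mul]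
  exact sup_mono_fun fun i _ => (B i).le_opNNNorm x

theorem IsMInfIsometry.nnnorm_pow_apply_le {𝕜 X : Type*} [RCLike 𝕜] [NormedAddCommGroup X]
    [NormedSpace 𝕜 X] {T : X →L[𝕜] X} {m : ℕ} (hT : IsMInfIsometry T m) (n : ℕ) (x : X) :
    ‖(T ^ n) x‖₊ ≤ (range m).sup fun k => ‖(T ^ k) x‖₊ := by
  refine le_sup_range_of_forall_add_le_sup_range (fun k => ‖(T ^ k) x‖₊) m (fun j => ?_) n
  have hshift : ∀ k, (T ^ (j + k)) x = (T ^ k) ((T ^ j) x) := fun k => by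
    rw [add_comm, pow_add, mul_apply_eq_comp]
  simp only [hshift]
  exact le_sup_range_of_sup_even_eq_sup_odd (fun k => ‖(T ^ k) ((T ^ j) x)‖₊) m (hT _)

theorem stmt_16_general {𝕜 X : Type*} [RCLike 𝕜] [NormedAddCommGroup X] [NormedSpace 𝕜 X]
    (T : X →L[𝕜] X) (m : ℕ) (hT : IsMInfIsometry T m) :
    (∀ (n : ℕ) (x : X), ‖(T ^ n) x‖₊ ≤ (Finset.range m).sup fun k => ‖(T ^ k) x‖₊) ∧
    ∀ n : ℕ, ‖T ^ n‖₊ ≤ (Finset.range m).sup fun k => ‖T ^ k‖₊ :=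
  ⟨hT.nnnorm_pow_apply_le,
    fun n => ContinuousLinearMap.opNNNorm_le_sup_of_nnnorm_apply_le (hT.nnnorm_pow_apply_le n)⟩

theorem stmt_16 {𝕜 X : Type*} [RCLike 𝕜] [NormedAddCommGroup X] [NormedSpace 𝕜 X]
    [CompleteSpace X] (T : X →L[𝕜] X) (m : ℕ) (hm : 1 ≤ m) (hT : IsMInfIsometry T m) :
    (∀ (n : ℕ) (x : X), ‖(T ^ n) x‖₊ ≤ (Finset.range m).sup fun k => ‖(T ^ k) x‖₊) ∧
    ∀ n : ℕ, ‖T ^ n‖₊ ≤ (Finset.range m).sup fun k => ‖T ^ k‖₊ :=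
  stmt_16_general T m hT
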